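/- Let 1 < β < 2, T > 0, and let z: 𝕋 × [0,T] → ℝ² be a C^∞ solution of the sharp-front equation ∂_t z = ζ + λ z_s, where for each t the curve z(·,t) is simple with nowhere-vanishing derivative, λ: 𝕋 × [0,T] → ℝ is smooth and 1-periodic in s with λ(0,t) = 0 for all t, and the initial curve z₀ = z(·,0) satisfies ∂_s z₀ · ∂_s² z₀ ≡ 0. Then |∂_s z(s,t)|² is independent of s for all t ∈ [0,T] if and only if λ is given for all (s,t) by λ(s,t) = s ∫_𝕋 (z_s(s₁,t)/|z_s(s₁,t)|²) · ∂_{s₁}ζ(s₁,t) ds₁ − ∫₀^s (z_s(s₁,t)/|z_s(s₁,t)|²) · ∂_{s₁}ζ(s₁,t) ds₁. -/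

import Mathlib

/- STATEMENT 1: (Proposition: Parameterisation determines λ.) For a smooth solution
z of ∂ₜz = ζ + λ zₛ on 𝕋 × [0,T] (z simple with nowhere-vanishing derivative for each t,
λ smooth, 1-periodic in s, λ(0,t) = 0, and ∂ₛz₀ · ∂ₛ²z₀ ≡ 0 initially), |∂ₛz(s,t)|² is
independent of s for all t iff λ is given by formula (2.7) of the paper. Here
ζ(s,t) = −∫_𝕋 (zₛ(s_*,t) − zₛ(s,t))/|z(s_*,t) − z(s,t)|^β ds_*, and functions on
𝕋 = ℝ/ℤ are identified with 1-periodic functions on ℝ. -/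

open MeasureTheory intervalIntegral
open scoped RealInnerProductSpace

noncomputable section

abbrev E2 := EuclideanSpace ℝ (Fin 2)


variable {F : Type*} [NormedAddCommGroup F] [NormedSpace ℝ F]

/-- partial derivative in the first variable -/
noncomputable def P1 (f : ℝ → ℝ → F) (s t : ℝ) : F := deriv (fun x => f x t) s
/-- partial derivative in the second variable -/
noncomputable def P2 (f : ℝ → ℝ → F) (s t : ℝ) : F := deriv (fun x => f s x) t

variable {f : ℝ → ℝ → F}

lemma hasDerivAt_P1' (hf : ContDiff ℝ (⊤ : ℕ∞) (fun p : ℝ × ℝ => f p.1 p.2)) (s t : ℝ) :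
    HasDerivAt (fun x => f x t) (fderiv ℝ (fun p : ℝ × ℝ => f p.1 p.2) (s, t) (1, 0)) s := by
  have hd := (hf.differentiable (by simp) (s, t)).hasFDerivAt
  have hline : HasDerivAt (fun x : ℝ => ((x, t) : ℝ × ℝ)) ((1 : ℝ), (0 : ℝ)) s :=
    (hasDerivAt_id s).prodMk (hasDerivAt_const s t)
  simpa [Function.comp_def] using hd.comp_hasDerivAt s hline

lemma hasDerivAt_P2' (hf : ContDiff ℝ (⊤ : ℕ∞) (fun p : ℝ × ℝ => f p.1 p.2)) (s t : ℝ) :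
    HasDerivAt (fun x => f s x) (fderiv ℝ (fun p : ℝ × ℝ => f p.1 p.2) (s, t) (0, 1)) t := by
  have hd := (hf.differentiable (by simp) (s, t)).hasFDerivAt
  have hline : HasDerivAt (fun x : ℝ => ((s, x) : ℝ × ℝ)) ((0 : ℝ), (1 : ℝ)) t :=
    (hasDerivAt_const t s).prodMk (hasDerivAt_id t)
  simpa [Function.comp_def] using hd.comp_hasDerivAt t hline

lemma P1_eq (hf : ContDiff ℝ (⊤ : ℕ∞) (fun p : ℝ × ℝ => f p.1 p.2)) (s t : ℝ) :
    P1 f s t = fderiv ℝ (fun p : ℝ × ℝ => f p.1 p.2) (s, t) (1, 0) :=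
  (hasDerivAt_P1' hf s t).deriv

lemma P2_eq (hf : ContDiff ℝ (⊤ : ℕ∞) (fun p : ℝ × ℝ => f p.1 p.2)) (s t : ℝ) :
    P2 f s t = fderiv ℝ (fun p : ℝ × ℝ => f p.1 p.2) (s, t) (0, 1) :=
  (hasDerivAt_P2' hf s t).deriv

lemma hasDerivAt_P1 (hf : ContDiff ℝ (⊤ : ℕ∞) (fun p : ℝ × ℝ => f p.1 p.2)) (s t : ℝ) :
    HasDerivAt (fun x => f x t) (P1 f s t) s := by
  rw [P1_eq hf]; exact hasDerivAt_P1' hf s t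

lemma hasDerivAt_P2 (hf : ContDiff ℝ (⊤ : ℕ∞) (fun p : ℝ × ℝ => f p.1 p.2)) (s t : ℝ) :
    HasDerivAt (fun x => f s x) (P2 f s t) t := by
  rw [P2_eq hf]; exact hasDerivAt_P2' hf s t

lemma contDiff_fderiv_apply (hf : ContDiff ℝ (⊤ : ℕ∞) (fun p : ℝ × ℝ => f p.1 p.2)) (v : ℝ × ℝ) :
    ContDiff ℝ (⊤ : ℕ∞) (fun p : ℝ × ℝ => fderiv ℝ (fun p : ℝ × ℝ => f p.1 p.2) p v) :=
  (hf.fderiv_right (by simp)).clm_apply contDiff_const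

lemma contDiff_P1 (hf : ContDiff ℝ (⊤ : ℕ∞) (fun p : ℝ × ℝ => f p.1 p.2)) :
    ContDiff ℝ (⊤ : ℕ∞) (fun p : ℝ × ℝ => P1 f p.1 p.2) := by
  have h := contDiff_fderiv_apply hf (1, 0)
  have heq : (fun p : ℝ × ℝ => P1 f p.1 p.2)
      = fun p : ℝ × ℝ => fderiv ℝ (fun q : ℝ × ℝ => f q.1 q.2) p (1, 0) :=
    funext fun p => P1_eq hf p.1 p.2
  rw [heq]; exact h

lemma contDiff_P2 (hf : ContDiff ℝ (⊤ : ℕ∞) (fun p : ℝ × ℝ => f p.1 p.2)) :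
    ContDiff ℝ (⊤ : ℕ∞) (fun p : ℝ × ℝ => P2 f p.1 p.2) := by
  have h := contDiff_fderiv_apply hf (0, 1)
  have heq : (fun p : ℝ × ℝ => P2 f p.1 p.2)
      = fun p : ℝ × ℝ => fderiv ℝ (fun q : ℝ × ℝ => f q.1 q.2) p (0, 1) :=
    funext fun p => P2_eq hf p.1 p.2
  rw [heq]; exact h

lemma clairaut (hf : ContDiff ℝ (⊤ : ℕ∞) (fun p : ℝ × ℝ => f p.1 p.2)) (s t : ℝ) :
    P2 (P1 f) s t = P1 (P2 f) s t := by
  set F2 : ℝ × ℝ → F := fun p => f p.1 p.2 with hF2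
  have hf1 : ContDiff ℝ (⊤ : ℕ∞) (fderiv ℝ F2) := hf.fderiv_right (by simp)
  have hder : ∀ y : ℝ × ℝ, HasFDerivAt F2 (fderiv ℝ F2 y) y := fun y =>
    (hf.differentiable (by simp) y).hasFDerivAt
  have hder2 : HasFDerivAt (fderiv ℝ F2) (fderiv ℝ (fderiv ℝ F2) (s, t)) (s, t) :=
    (hf1.differentiable (by simp) (s, t)).hasFDerivAt
  have hsymm := second_derivative_symmetric hder hder2
  -- P2 (P1 f) s t = deriv (fun x => P1 f s x) t
  have h1 : P2 (P1 f) s t = fderiv ℝ (fun p : ℝ × ℝ => P1 f p.1 p.2) (s, t) (0, 1) :=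
    P2_eq (contDiff_P1 hf) s t
  have h2 : P1 (P2 f) s t = fderiv ℝ (fun p : ℝ × ℝ => P2 f p.1 p.2) (s, t) (1, 0) :=
    P1_eq (contDiff_P2 hf) s t
  have key : ∀ v w : ℝ × ℝ,
      fderiv ℝ (fun p : ℝ × ℝ => fderiv ℝ F2 p v) (s, t) w
        = fderiv ℝ (fderiv ℝ F2) (s, t) w v := by
    intro v w
    have : (fun p : ℝ × ℝ => fderiv ℝ F2 p v)
        = (fun L : (ℝ × ℝ) →L[ℝ] F => L v) ∘ (fderiv ℝ F2) := rfl
    have hcomp := ((ContinuousLinearMap.apply ℝ F v).hasFDerivAt.comp (s, t) hder2)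
    have : HasFDerivAt (fun p : ℝ × ℝ => fderiv ℝ F2 p v)
        ((ContinuousLinearMap.apply ℝ F v).comp (fderiv ℝ (fderiv ℝ F2) (s, t))) (s, t) := hcomp
    rw [this.fderiv]
    rfl
  have e1 : (fun p : ℝ × ℝ => P1 f p.1 p.2)
      = fun p : ℝ × ℝ => fderiv ℝ F2 p (1, 0) := funext fun p => P1_eq hf p.1 p.2
  have e2 : (fun p : ℝ × ℝ => P2 f p.1 p.2)
      = fun p : ℝ × ℝ => fderiv ℝ F2 p (0, 1) := funext fun p => P2_eq hf p.1 p.2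
  rw [h1, h2, e1, e2, key (1, 0) (0, 1), key (0, 1) (1, 0), hsymm]


lemma contSlice1 {F : Type*} [NormedAddCommGroup F] [NormedSpace ℝ F] {f : ℝ → ℝ → F}
    (hf : Continuous (fun p : ℝ × ℝ => f p.1 p.2)) (t : ℝ) : Continuous fun s => f s t :=
  hf.comp (continuous_id.prodMk continuous_const)

lemma contSlice2 {F : Type*} [NormedAddCommGroup F] [NormedSpace ℝ F] {f : ℝ → ℝ → F}
    (hf : Continuous (fun p : ℝ × ℝ => f p.1 p.2)) (s : ℝ) : Continuous fun t => f s t :=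
  hf.comp (continuous_const.prodMk continuous_id)

lemma P1_periodic {F : Type*} [NormedAddCommGroup F] [NormedSpace ℝ F] {f : ℝ → ℝ → F}
    (hper : ∀ s t, f (s + 1) t = f s t) (s t : ℝ) : P1 f (s + 1) t = P1 f s t := by
  have h : (fun x => f (x + 1) t) = fun x => f x t := funext fun x => hper x t
  calc P1 f (s + 1) t = deriv (fun x => f x t) (s + 1) := rfl
    _ = deriv (fun x => f (x + 1) t) s := (deriv_comp_add_const _ _ _).symm
    _ = deriv (fun x => f x t) s := by rw [h]

/-- σ = |z_s|² as inner product -/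
noncomputable def sigF (z : ℝ → ℝ → E2) : ℝ → ℝ → ℝ := fun a b => ⟪P1 z a b, P1 z a b⟫

/-- ζ recovered from the evolution equation -/
noncomputable def zetaF (z : ℝ → ℝ → E2) (lam : ℝ → ℝ → ℝ) : ℝ → ℝ → E2 :=
  fun a b => P2 z a b - lam a b • P1 z a b

/-- G = ⟨z_s, ∂_s ζ⟩ -/
noncomputable def GF (z : ℝ → ℝ → E2) (lam : ℝ → ℝ → ℝ) : ℝ → ℝ → ℝ :=
  fun a b => ⟪P1 z a b, P1 (zetaF z lam) a b⟫

theorem parameterisation_determines_lambda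
    (β T : ℝ) (hβ1 : 1 < β) (hβ2 : β < 2) (hT : 0 < T)
    (z : ℝ → ℝ → E2) (lam : ℝ → ℝ → ℝ) (ζ : ℝ → ℝ → E2)
    (hz_smooth : ContDiff ℝ (⊤ : ℕ∞) (fun p : ℝ × ℝ => z p.1 p.2))
    (hlam_smooth : ContDiff ℝ (⊤ : ℕ∞) (fun p : ℝ × ℝ => lam p.1 p.2))
    (hz_per : ∀ s t, z (s + 1) t = z s t)
    (hlam_per : ∀ s t, lam (s + 1) t = lam s t)
    (hlam_zero : ∀ t ∈ Set.Icc (0 : ℝ) T, lam 0 t = 0)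
    (hsimple : ∀ t ∈ Set.Icc (0 : ℝ) T, Set.InjOn (fun s => z s t) (Set.Ico (0 : ℝ) 1))
    (hderiv_ne : ∀ t ∈ Set.Icc (0 : ℝ) T, ∀ s, deriv (fun s' => z s' t) s ≠ 0)
    (hζ : ∀ s t, ζ s t =
      -(∫ q in (0:ℝ)..1, (‖z q t - z s t‖ ^ β)⁻¹ •
          (deriv (fun s' => z s' t) q - deriv (fun s' => z s' t) s)))
    (hevol : ∀ s, ∀ t ∈ Set.Icc (0 : ℝ) T,
      deriv (fun t' => z s t') t = ζ s t + lam s t • deriv (fun s' => z s' t) s)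
    (hinit : ∀ s,
      ⟪deriv (fun s' => z s' 0) s, deriv (deriv (fun s' => z s' 0)) s⟫ = 0) :
    ((∀ t ∈ Set.Icc (0 : ℝ) T, ∀ s₁ s₂ : ℝ,
        ‖deriv (fun s' => z s' t) s₁‖ ^ 2 = ‖deriv (fun s' => z s' t) s₂‖ ^ 2) ↔
      (∀ s : ℝ, ∀ t ∈ Set.Icc (0 : ℝ) T,
        lam s t =
          s * (∫ q in (0:ℝ)..1,
              (‖deriv (fun s' => z s' t) q‖ ^ 2)⁻¹ *
                ⟪deriv (fun s' => z s' t) q, deriv (fun s' => ζ s' t) q⟫)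
            - ∫ q in (0:ℝ)..s,
              (‖deriv (fun s' => z s' t) q‖ ^ 2)⁻¹ *
                ⟪deriv (fun s' => z s' t) q, deriv (fun s' => ζ s' t) q⟫)) := by
  classical
  have hzsm : ContDiff ℝ (⊤ : ℕ∞) (fun p : ℝ × ℝ => P1 z p.1 p.2) := contDiff_P1 hz_smooth
  have hztm : ContDiff ℝ (⊤ : ℕ∞) (fun p : ℝ × ℝ => P2 z p.1 p.2) := contDiff_P2 hz_smooth
  have hzeta_sm : ContDiff ℝ (⊤ : ℕ∞) (fun p : ℝ × ℝ => zetaF z lam p.1 p.2) :=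
    hztm.sub (hlam_smooth.smul hzsm)
  have hsig_sm : ContDiff ℝ (⊤ : ℕ∞) (fun p : ℝ × ℝ => sigF z p.1 p.2) := ContDiff.inner ℝ hzsm hzsm
  have hG_sm : ContDiff ℝ (⊤ : ℕ∞) (fun p : ℝ × ℝ => GF z lam p.1 p.2) :=
    ContDiff.inner ℝ hzsm (contDiff_P1 hzeta_sm)
  -- ζ̂ = ζ on the strip
  have hzeta_eq : ∀ t ∈ Set.Icc (0 : ℝ) T, ∀ s, zetaF z lam s t = ζ s t := by
    intro t ht s
    have h := hevol s t ht
    have h2 : P2 z s t = ζ s t + lam s t • P1 z s t := h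
    simp only [zetaF, h2]
    abel
  have hzt_eq : ∀ a b : ℝ, P2 z a b = zetaF z lam a b + lam a b • P1 z a b := by
    intro a b; simp [zetaF]
  -- norm link
  have hnorm : ∀ (q t : ℝ), ‖deriv (fun s' => z s' t) q‖ ^ 2 = sigF z q t := fun q t =>
    (real_inner_self_eq_norm_sq (P1 z q t)).symm
  have hsig_pos : ∀ t ∈ Set.Icc (0 : ℝ) T, ∀ s, 0 < sigF z s t := by
    intro t ht s
    have hne : P1 z s t ≠ 0 := hderiv_ne t ht s
    have : (0:ℝ) < ‖P1 z s t‖ ^ 2 := pow_pos (norm_pos_iff.mpr hne) 2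
    rw [show sigF z s t = ‖P1 z s t‖ ^ 2 from real_inner_self_eq_norm_sq _]
    exact this
  -- P1 of sigma
  have hP1sig : ∀ a b : ℝ, P1 (sigF z) a b = 2 * ⟪P1 z a b, P1 (P1 z) a b⟫ := by
    intro a b
    have h := (HasDerivAt.inner ℝ (hasDerivAt_P1 hzsm a b) (hasDerivAt_P1 hzsm a b)).deriv
    have h2 : P1 (sigF z) a b
        = ⟪P1 z a b, P1 (P1 z) a b⟫ + ⟪P1 (P1 z) a b, P1 z a b⟫ := h
    rw [h2, real_inner_comm (P1 z a b) (P1 (P1 z) a b)]; ring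
  -- mixed derivative via Clairaut + evolution equation
  have hP2zs_eq : ∀ a b : ℝ, P2 (P1 z) a b
      = P1 (zetaF z lam) a b + P1 lam a b • P1 z a b + lam a b • P1 (P1 z) a b := by
    intro a b
    rw [clairaut hz_smooth a b]
    have hfun : (fun x => P2 z x b) = fun x => zetaF z lam x b + lam x b • P1 z x b :=
      funext fun x => hzt_eq x b
    have hD : HasDerivAt (fun x => zetaF z lam x b + lam x b • P1 z x b)
        (P1 (zetaF z lam) a b + (lam a b • P1 (P1 z) a b + P1 lam a b • P1 z a b)) a :=
      (hasDerivAt_P1 hzeta_sm a b).add ((hasDerivAt_P1 hlam_smooth a b).smul (hasDerivAt_P1 hzsm a b))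
    have h3 : P1 (P2 z) a b = deriv (fun x => P2 z x b) a := rfl
    rw [h3, hfun, hD.deriv]
    abel
  -- identity (★)
  have hstar : ∀ a b : ℝ, P2 (sigF z) a b
      = 2 * GF z lam a b + 2 * P1 lam a b * sigF z a b + lam a b * P1 (sigF z) a b := by
    intro a b
    have h := (HasDerivAt.inner ℝ (hasDerivAt_P2 hzsm a b) (hasDerivAt_P2 hzsm a b)).deriv
    have h1 : P2 (sigF z) a b
        = ⟪P1 z a b, P2 (P1 z) a b⟫ + ⟪P2 (P1 z) a b, P1 z a b⟫ := h
    rw [h1, real_inner_comm (P1 z a b) (P2 (P1 z) a b), hP2zs_eq a b, hP1sig a b]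
    simp only [inner_add_right, real_inner_smul_right]
    show (⟪P1 z a b, P1 (zetaF z lam) a b⟫ + P1 lam a b * ⟪P1 z a b, P1 z a b⟫
        + lam a b * ⟪P1 z a b, P1 (P1 z) a b⟫)
      + (⟪P1 z a b, P1 (zetaF z lam) a b⟫ + P1 lam a b * ⟪P1 z a b, P1 z a b⟫
        + lam a b * ⟪P1 z a b, P1 (P1 z) a b⟫)
      = 2 * GF z lam a b + 2 * P1 lam a b * sigF z a b
        + lam a b * (2 * ⟪P1 z a b, P1 (P1 z) a b⟫)
    show (GF z lam a b + P1 lam a b * sigF z a b + lam a b * ⟪P1 z a b, P1 (P1 z) a b⟫)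
      + (GF z lam a b + P1 lam a b * sigF z a b + lam a b * ⟪P1 z a b, P1 (P1 z) a b⟫)
      = 2 * GF z lam a b + 2 * P1 lam a b * sigF z a b
        + lam a b * (2 * ⟪P1 z a b, P1 (P1 z) a b⟫)
    ring
  -- integrand link
  have hIntegrand : ∀ t ∈ Set.Icc (0 : ℝ) T, ∀ q : ℝ,
      (‖deriv (fun s' => z s' t) q‖ ^ 2)⁻¹ *
          ⟪deriv (fun s' => z s' t) q, deriv (fun s' => ζ s' t) q⟫
        = (sigF z q t)⁻¹ * GF z lam q t := by
    intro t ht q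
    have hfun : (fun s' => ζ s' t) = fun s' => zetaF z lam s' t :=
      funext fun x => (hzeta_eq t ht x).symm
    rw [hnorm, hfun]
    rfl
  -- periodicity
  have hsig_per : ∀ (s t : ℝ), sigF z (s + 1) t = sigF z s t := by
    intro s t
    have := P1_periodic hz_per s t
    simp only [sigF, this]
  have hlam1 : ∀ t : ℝ, lam 1 t = lam 0 t := by
    intro t; simpa using hlam_per 0 t
  -- initial condition: σ(·,0) constant
  have hsig0const : ∀ s : ℝ, sigF z s 0 = sigF z 0 0 := by
    have hu0 : ∀ s, P1 (sigF z) s 0 = 0 := by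
      intro s
      rw [hP1sig]
      have h0 : ⟪P1 z s 0, P1 (P1 z) s 0⟫ = 0 := hinit s
      rw [h0]; ring
    have hdiff : Differentiable ℝ (fun x => sigF z x 0) := fun x =>
      (hasDerivAt_P1 hsig_sm x 0).differentiableAt
    intro s
    exact is_const_of_deriv_eq_zero hdiff (fun x => hu0 x) s 0
  constructor
  · -- forward direction
    intro hconst s t ht
    have hsigc : ∀ q : ℝ, sigF z q t = sigF z 0 t := by
      intro q
      rw [← hnorm q t, ← hnorm 0 t]
      exact hconst t ht q 0
    have hP1sig0 : ∀ q : ℝ, P1 (sigF z) q t = 0 := by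
      intro q
      have hfun : (fun x => sigF z x t) = fun _ => sigF z 0 t := funext hsigc
      show deriv (fun x => sigF z x t) q = 0
      rw [hfun, deriv_const]
    have hc : ∀ q : ℝ, P2 (sigF z) q t = P2 (sigF z) 0 t := by
      intro q
      have hcont1 : Continuous fun x => P2 (sigF z) q x :=
        contSlice2 (contDiff_P2 hsig_sm).continuous q
      have hcont0 : Continuous fun x => P2 (sigF z) 0 x :=
        contSlice2 (contDiff_P2 hsig_sm).continuous 0
      have heq : Set.EqOn (fun x => P2 (sigF z) q x) (fun x => P2 (sigF z) 0 x)
          (Set.Ioo (0:ℝ) T) := by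
        intro x hx
        have hmem : Set.Icc (0:ℝ) T ∈ nhds x := Icc_mem_nhds hx.1 hx.2
        have hev : (fun t' => sigF z q t') =ᶠ[nhds x] fun t' => sigF z 0 t' := by
          filter_upwards [hmem] with y hy
          rw [← hnorm q y, ← hnorm 0 y]
          exact hconst y hy q 0
        exact hev.deriv_eq
      have hcl := heq.closure hcont1 hcont0
      have hmem : t ∈ closure (Set.Ioo (0:ℝ) T) := by rw [closure_Ioo hT.ne]; exact ht
      exact hcl hmem
    have hσpos : 0 < sigF z 0 t := hsig_pos t ht 0
    have hσne : sigF z 0 t ≠ 0 := ne_of_gt hσpos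
    have hlam_deriv : ∀ q : ℝ, P1 lam q t
        = P2 (sigF z) 0 t / (2 * sigF z 0 t) - (sigF z 0 t)⁻¹ * GF z lam q t := by
      intro q
      have h := hstar q t
      rw [hP1sig0 q, hc q, hsigc q] at h
      have h2σ : (2:ℝ) * sigF z 0 t ≠ 0 := mul_ne_zero two_ne_zero hσne
      have h' : P1 lam q t = (P2 (sigF z) 0 t - 2 * GF z lam q t) / (2 * sigF z 0 t) := by
        rw [eq_div_iff h2σ]; linarith
      rw [h']
      field_simp
    have hGcont : Continuous fun q => GF z lam q t := contSlice1 hG_sm.continuous t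
    have key : ∀ x : ℝ, lam x t = x * (P2 (sigF z) 0 t / (2 * sigF z 0 t))
        - ∫ q in (0:ℝ)..x, (sigF z 0 t)⁻¹ * GF z lam q t := by
      intro x
      have hFTC : ∫ q in (0:ℝ)..x, P1 lam q t = lam x t - lam 0 t :=
        intervalIntegral.integral_eq_sub_of_hasDerivAt
          (fun q _ => hasDerivAt_P1 hlam_smooth q t)
          ((contSlice1 (contDiff_P1 hlam_smooth).continuous t).intervalIntegrable 0 x)
      rw [hlam_zero t ht, sub_zero] at hFTC
      rw [← hFTC,
        intervalIntegral.integral_congr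
          (g := fun q => P2 (sigF z) 0 t / (2 * sigF z 0 t) - (sigF z 0 t)⁻¹ * GF z lam q t)
          (fun q _ => hlam_deriv q),
        intervalIntegral.integral_sub intervalIntegrable_const
          ((show Continuous fun q => (sigF z 0 t)⁻¹ * GF z lam q t from continuous_const.mul hGcont).intervalIntegrable 0 x)]
      simp [intervalIntegral.integral_const]
      ring
    have h1 : P2 (sigF z) 0 t / (2 * sigF z 0 t)
        = ∫ q in (0:ℝ)..1, (sigF z 0 t)⁻¹ * GF z lam q t := by
      have hk := key 1
      rw [hlam1 t, hlam_zero t ht] at hk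
      linarith
    have hint_eq : ∀ x : ℝ, (∫ q in (0:ℝ)..x,
        (‖deriv (fun s' => z s' t) q‖ ^ 2)⁻¹ *
          ⟪deriv (fun s' => z s' t) q, deriv (fun s' => ζ s' t) q⟫)
        = ∫ q in (0:ℝ)..x, (sigF z 0 t)⁻¹ * GF z lam q t := by
      intro x
      apply intervalIntegral.integral_congr
      intro q _
      beta_reduce
      rw [hIntegrand t ht q, hsigc q]
    rw [hint_eq s, hint_eq 1, ← h1]
    exact key s
  · -- backward direction
    intro hlam_formula t ht s₁ s₂
    have hSig0cont : Continuous fun x => sigF z 0 x := contSlice2 hsig_sm.continuous 0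
    have hG0cont : Continuous fun x => GF z lam 0 x := contSlice2 hG_sm.continuous 0
    have hLam1cont : Continuous fun x => P1 lam 0 x :=
      contSlice2 (contDiff_P1 hlam_smooth).continuous 0
    -- a uniform open interval around [0,T] where sigF z 0 · ≠ 0
    obtain ⟨δ, hδpos, hδ⟩ : ∃ δ > 0, ∀ x : ℝ, -δ < x → x < T + δ → sigF z 0 x ≠ 0 := by
      have hopen : IsOpen {x : ℝ | sigF z 0 x ≠ 0} :=
        (isClosed_eq hSig0cont continuous_const).isOpen_compl
      have hsub : Set.Icc (0:ℝ) T ⊆ {x : ℝ | sigF z 0 x ≠ 0} := fun x hx =>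
        ne_of_gt (hsig_pos x hx 0)
      obtain ⟨δ, hδpos, hthick⟩ :=
        (isCompact_Icc : IsCompact (Set.Icc (0:ℝ) T)).exists_thickening_subset_open hopen hsub
      refine ⟨δ, hδpos, fun x hx1 hx2 => ?_⟩
      apply hthick
      rw [Metric.mem_thickening_iff]
      rcases le_total x 0 with hx0 | hx0
      · exact ⟨0, Set.mem_Icc.mpr ⟨le_refl 0, hT.le⟩,
          by rw [Real.dist_eq, abs_lt]; constructor <;> linarith⟩
      · rcases le_total x T with hxT | hxT
        · exact ⟨x, Set.mem_Icc.mpr ⟨hx0, hxT⟩, by simpa [Real.dist_eq] using hδpos⟩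
        · exact ⟨T, Set.mem_Icc.mpr ⟨hT.le, le_refl T⟩,
            by rw [Real.dist_eq, abs_lt]; constructor <;> linarith⟩
    set W : Set ℝ := Set.Ioo (-δ) (T + δ) with hW
    have hWopen : IsOpen W := isOpen_Ioo
    have hIccW : Set.Icc (0:ℝ) T ⊆ W := fun x hx => ⟨by linarith [hx.1], by linarith [hx.2]⟩
    have hWne : ∀ x ∈ W, sigF z 0 x ≠ 0 := fun x hx => hδ x hx.1 hx.2
    set I : ℝ → ℝ := fun x => P1 lam 0 x + (sigF z 0 x)⁻¹ * GF z lam 0 x with hIdef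
    have hIcontAt : ∀ x ∈ W, ContinuousAt I x := fun x hx =>
      hLam1cont.continuousAt.add
        ((hSig0cont.continuousAt.inv₀ (hWne x hx)).mul hG0cont.continuousAt)
    have hIcontOn : ContinuousOn I W := fun x hx => (hIcontAt x hx).continuousWithinAt
    -- λ_s + σ⁻¹ G = I on the strip
    have hkey1 : ∀ t' ∈ Set.Icc (0:ℝ) T, ∀ q : ℝ,
        P1 lam q t' + (sigF z q t')⁻¹ * GF z lam q t' = I t' := by
      intro t' ht'
      have hfcont : Continuous fun u => (sigF z u t')⁻¹ * GF z lam u t' :=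
        ((contSlice1 hsig_sm.continuous t').inv₀ (fun u => ne_of_gt (hsig_pos t' ht' u))).mul
          (contSlice1 hG_sm.continuous t')
      have hlam_eq : ∀ x : ℝ, lam x t'
          = x * (∫ u in (0:ℝ)..1, (sigF z u t')⁻¹ * GF z lam u t')
            - ∫ u in (0:ℝ)..x, (sigF z u t')⁻¹ * GF z lam u t' := by
        intro x
        rw [hlam_formula x t' ht']
        congr 1
        · congr 1
          apply intervalIntegral.integral_congr
          intro u _
          beta_reduce
          rw [hIntegrand t' ht' u]
        · apply intervalIntegral.integral_congr
          intro u _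
          beta_reduce
          rw [hIntegrand t' ht' u]
      have hD : ∀ q : ℝ, P1 lam q t'
          = (∫ u in (0:ℝ)..1, (sigF z u t')⁻¹ * GF z lam u t')
            - (sigF z q t')⁻¹ * GF z lam q t' := by
        intro q
        have h1 : HasDerivAt (fun x : ℝ => x * ∫ u in (0:ℝ)..1, (sigF z u t')⁻¹ * GF z lam u t')
            (∫ u in (0:ℝ)..1, (sigF z u t')⁻¹ * GF z lam u t') q := by
          simpa using (hasDerivAt_id q).mul_const
            (∫ u in (0:ℝ)..1, (sigF z u t')⁻¹ * GF z lam u t')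
        have h2 : HasDerivAt (fun x : ℝ => ∫ u in (0:ℝ)..x, (sigF z u t')⁻¹ * GF z lam u t')
            ((sigF z q t')⁻¹ * GF z lam q t') q :=
          intervalIntegral.integral_hasDerivAt_right (hfcont.intervalIntegrable 0 q)
            (hfcont.stronglyMeasurableAtFilter _ _) hfcont.continuousAt
        have h3 := h1.sub h2
        have hfun : (fun x => lam x t')
            = fun x => x * (∫ u in (0:ℝ)..1, (sigF z u t')⁻¹ * GF z lam u t')
                - ∫ u in (0:ℝ)..x, (sigF z u t')⁻¹ * GF z lam u t' := funext hlam_eq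
        show deriv (fun x => lam x t') q = _
        rw [hfun]
        exact h3.deriv
      intro q
      have hq := hD q
      have h0 := hD 0
      have hI : I t' = P1 lam 0 t' + (sigF z 0 t')⁻¹ * GF z lam 0 t' := rfl
      rw [hI, hq, h0]
      ring
    -- the transport equation for σ
    have hPDE : ∀ t' ∈ Set.Icc (0:ℝ) T, ∀ q : ℝ,
        P2 (sigF z) q t' = 2 * I t' * sigF z q t' + lam q t' * P1 (sigF z) q t' := by
      intro t' ht' q
      have h := hstar q t'
      have hk := hkey1 t' ht' q
      have hσ : sigF z q t' ≠ 0 := ne_of_gt (hsig_pos t' ht' q)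
      have hcancel : (sigF z q t')⁻¹ * GF z lam q t' * sigF z q t' = GF z lam q t' := by
        field_simp
      have hplam : P1 lam q t' = I t' - (sigF z q t')⁻¹ * GF z lam q t' := by linarith
      rw [h, hplam]
      linear_combination (-2 : ℝ) * hcancel
    -- the comparison function σ̃
    set st : ℝ → ℝ := fun x => sigF z 0 0 * Real.exp (2 * ∫ τ in (0:ℝ)..x, I τ) with hstdef
    have hst_deriv : ∀ x ∈ W, HasDerivAt st (2 * I x * st x) x := by
      intro x hx
      have h0W : (0:ℝ) ∈ W := hIccW ⟨le_refl 0, hT.le⟩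
      have hint : IntervalIntegrable I volume 0 x := by
        apply ContinuousOn.intervalIntegrable
        exact hIcontOn.mono (Set.OrdConnected.uIcc_subset Set.ordConnected_Ioo h0W hx)
      have hmeas : StronglyMeasurableAtFilter I (nhds x) volume :=
        ContinuousOn.stronglyMeasurableAtFilter hWopen hIcontOn x hx
      have hFTC : HasDerivAt (fun y : ℝ => ∫ τ in (0:ℝ)..y, I τ) (I x) x :=
        intervalIntegral.integral_hasDerivAt_right hint hmeas (hIcontAt x hx)
      have h2 : HasDerivAt (fun y : ℝ => Real.exp (2 * ∫ τ in (0:ℝ)..y, I τ))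
          (Real.exp (2 * ∫ τ in (0:ℝ)..x, I τ) * (2 * I x)) x := by
        simpa using (hFTC.const_mul (2:ℝ)).exp
      have h3 := h2.const_mul (sigF z 0 0)
      have hval : 2 * I x * st x
          = sigF z 0 0 * (Real.exp (2 * ∫ τ in (0:ℝ)..x, I τ) * (2 * I x)) := by
        rw [hstdef]; ring
      rw [hval]
      exact h3
    -- energy function and its derivative
    set Eand : ℝ → ℝ := fun x => ∫ q in (0:ℝ)..1, (sigF z q x - st x)^2 with hEdef
    set ED : ℝ → ℝ := fun x => ∫ q in (0:ℝ)..1,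
        2 * (sigF z q x - st x) * (P2 (sigF z) q x - 2 * I x * st x) with hEDdef
    have hE_deriv : ∀ x₀ ∈ Set.Icc (0:ℝ) T, HasDerivAt Eand (ED x₀) x₀ := by
      intro x₀ hx₀
      have hballW : ∀ x ∈ Metric.ball x₀ (δ/4), x ∈ W := by
        intro x hx
        rw [Metric.mem_ball, Real.dist_eq, abs_lt] at hx
        constructor
        · have := hx₀.1; linarith [hx.1]
        · have := hx₀.2; linarith [hx.2]
      have hcontF' : ContinuousOn (fun p : ℝ × ℝ =>
          2 * (sigF z p.1 p.2 - st p.2) * (P2 (sigF z) p.1 p.2 - 2 * I p.2 * st p.2))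
          (Set.univ ×ˢ W) := by
        intro p hp
        have hpW : p.2 ∈ W := hp.2
        have hstc : ContinuousAt st p.2 := (hst_deriv p.2 hpW).continuousAt
        have hIc : ContinuousAt I p.2 := hIcontAt p.2 hpW
        apply ContinuousAt.continuousWithinAt
        have c1 : ContinuousAt (fun p : ℝ × ℝ => sigF z p.1 p.2) p :=
          hsig_sm.continuous.continuousAt
        have c2 : ContinuousAt (fun p : ℝ × ℝ => st p.2) p := hstc.comp continuousAt_snd
        have c3 : ContinuousAt (fun p : ℝ × ℝ => P2 (sigF z) p.1 p.2) p :=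
          (contDiff_P2 hsig_sm).continuous.continuousAt
        have c4 : ContinuousAt (fun p : ℝ × ℝ => I p.2) p := hIc.comp continuousAt_snd
        exact (continuousAt_const.mul (c1.sub c2)).mul
          (c3.sub ((continuousAt_const.mul c4).mul c2))
      have hKsub : (Set.Icc (0:ℝ) 1) ×ˢ (Set.Icc (x₀ - δ/4) (x₀ + δ/4)) ⊆ Set.univ ×ˢ W := by
        intro p hp
        refine ⟨trivial, ?_, ?_⟩
        · have := (hp.2 : p.2 ∈ Set.Icc (x₀ - δ/4) (x₀ + δ/4)).1
          have := hx₀.1; linarith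
        · have := (hp.2 : p.2 ∈ Set.Icc (x₀ - δ/4) (x₀ + δ/4)).2
          have := hx₀.2; linarith
      obtain ⟨C, hC⟩ := ((isCompact_Icc.prod isCompact_Icc) :
          IsCompact ((Set.Icc (0:ℝ) 1) ×ˢ (Set.Icc (x₀ - δ/4) (x₀ + δ/4)))).exists_bound_of_continuousOn
        (hcontF'.mono hKsub)
      have hmain := intervalIntegral.hasDerivAt_integral_of_dominated_loc_of_deriv_le
        (F := fun x q => (sigF z q x - st x)^2)
        (F' := fun x q => 2 * (sigF z q x - st x) * (P2 (sigF z) q x - 2 * I x * st x))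
        (x₀ := x₀) (a := 0) (b := 1) (bound := fun _ => C) (s := Metric.ball x₀ (δ/4)) (μ := volume)
        (Metric.ball_mem_nhds x₀ (by positivity))
        (Filter.Eventually.of_forall (fun x =>
          (((contSlice1 hsig_sm.continuous x).sub continuous_const).pow 2).aestronglyMeasurable))
        ((((contSlice1 hsig_sm.continuous x₀).sub continuous_const).pow 2).intervalIntegrable 0 1)
        (((continuous_const.mul ((contSlice1 hsig_sm.continuous x₀).sub continuous_const)).mul
          ((contSlice1 (contDiff_P2 hsig_sm).continuous x₀).sub continuous_const)).aestronglyMeasurable)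
        (Filter.Eventually.of_forall (fun q hq x hx => by
          rw [Set.uIoc_of_le (zero_le_one (α := ℝ))] at hq
          have hq1 : q ∈ Set.Icc (0:ℝ) 1 := Set.mem_Icc.mpr ⟨le_of_lt hq.1, hq.2⟩
          have hx1 : x ∈ Set.Icc (x₀ - δ/4) (x₀ + δ/4) := by
            rw [Metric.mem_ball, Real.dist_eq, abs_lt] at hx
            exact Set.mem_Icc.mpr ⟨by linarith [hx.1], by linarith [hx.2]⟩
          exact hC (q, x) (Set.mk_mem_prod hq1 hx1)))
        intervalIntegrable_const
        (Filter.Eventually.of_forall (fun q hq x hx => by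
          have hxW : x ∈ W := hballW x hx
          have hD := ((hasDerivAt_P2 hsig_sm q x).sub (hst_deriv x hxW)).pow 2
          have : ((2:ℕ) : ℝ) * (sigF z q x - st x) ^ (2 - 1) * (P2 (sigF z) q x - 2 * I x * st x)
              = 2 * (sigF z q x - st x) * (P2 (sigF z) q x - 2 * I x * st x) := by
            norm_num
          rw [← this]
          exact hD))
      exact hmain.2
    -- rewriting the derivative of the energy on [0,T]
    have hE'_eq : ∀ x ∈ Set.Icc (0:ℝ) T, ED x = 4 * I x * Eand x
        - ∫ q in (0:ℝ)..1, P1 lam q x * (sigF z q x - st x)^2 := by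
      intro x hx
      have cw : Continuous fun q => sigF z q x - st x :=
        (contSlice1 hsig_sm.continuous x).sub continuous_const
      have cP1sig : Continuous fun q => P1 (sigF z) q x :=
        contSlice1 (contDiff_P1 hsig_sm).continuous x
      have cP1lam : Continuous fun q => P1 lam q x :=
        contSlice1 (contDiff_P1 hlam_smooth).continuous x
      have clam : Continuous fun q => lam q x := contSlice1 hlam_smooth.continuous x
      have i1 : IntervalIntegrable (fun q => 4 * I x * (sigF z q x - st x)^2) volume 0 1 :=
        (continuous_const.mul (cw.pow 2)).intervalIntegrable 0 1
      have i2 : IntervalIntegrable (fun q => P1 lam q x * (sigF z q x - st x)^2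
          + lam q x * (2 * (sigF z q x - st x) * P1 (sigF z) q x)) volume 0 1 :=
        ((cP1lam.mul (cw.pow 2)).add
          (clam.mul ((continuous_const.mul cw).mul cP1sig))).intervalIntegrable 0 1
      have i3 : IntervalIntegrable (fun q => P1 lam q x * (sigF z q x - st x)^2) volume 0 1 :=
        (cP1lam.mul (cw.pow 2)).intervalIntegrable 0 1
      have hdecomp : ∀ q : ℝ,
          2 * (sigF z q x - st x) * (P2 (sigF z) q x - 2 * I x * st x)
            = (4 * I x * (sigF z q x - st x)^2
              + (P1 lam q x * (sigF z q x - st x)^2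
                + lam q x * (2 * (sigF z q x - st x) * P1 (sigF z) q x)))
              - P1 lam q x * (sigF z q x - st x)^2 := by
        intro q
        have hp := hPDE x hx q
        rw [hp]; ring
      have hstep1 : ED x = ∫ q in (0:ℝ)..1,
          ((4 * I x * (sigF z q x - st x)^2
            + (P1 lam q x * (sigF z q x - st x)^2
              + lam q x * (2 * (sigF z q x - st x) * P1 (sigF z) q x)))
            - P1 lam q x * (sigF z q x - st x)^2) := by
        apply intervalIntegral.integral_congr
        intro q _
        beta_reduce
        rw [hdecomp q]
      rw [hstep1, intervalIntegral.integral_sub (i1.add i2) i3,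
        intervalIntegral.integral_add i1 i2]
      have hmid0 : (∫ q in (0:ℝ)..1, (P1 lam q x * (sigF z q x - st x)^2
          + lam q x * (2 * (sigF z q x - st x) * P1 (sigF z) q x))) = 0 := by
        have hD : ∀ q : ℝ, HasDerivAt (fun y => lam y x * (sigF z y x - st x)^2)
            (P1 lam q x * (sigF z q x - st x)^2
              + lam q x * (2 * (sigF z q x - st x) * P1 (sigF z) q x)) q := by
          intro q
          have h1 := (hasDerivAt_P1 hlam_smooth q x).mul
            (((hasDerivAt_P1 hsig_sm q x).sub_const (st x)).pow 2)
          have : P1 lam q x * (sigF z q x - st x) ^ 2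
              + lam q x * (((2:ℕ):ℝ) * (sigF z q x - st x) ^ (2 - 1) * P1 (sigF z) q x)
              = P1 lam q x * (sigF z q x - st x)^2
              + lam q x * (2 * (sigF z q x - st x) * P1 (sigF z) q x) := by
            norm_num
          rw [← this]
          exact h1
        have hmid := intervalIntegral.integral_eq_sub_of_hasDerivAt (fun q _ => hD q) i2
        have hper1 : sigF z 1 x = sigF z 0 x := by simpa using hsig_per 0 x
        rw [hmid, hlam1 x, hper1, sub_self]
      rw [hmid0, intervalIntegral.integral_const_mul, add_zero]
    -- three constants
    obtain ⟨C₁, hC₁⟩ := (isCompact_Icc : IsCompact (Set.Icc (0:ℝ) T)).exists_bound_of_continuousOn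
      (hIcontOn.mono hIccW)
    obtain ⟨C₂, hC₂⟩ := ((isCompact_Icc.prod isCompact_Icc) :
        IsCompact ((Set.Icc (0:ℝ) 1) ×ˢ (Set.Icc (0:ℝ) T))).exists_bound_of_continuousOn
      ((contDiff_P1 hlam_smooth).continuous.continuousOn)
    have hEnonneg : ∀ x, 0 ≤ Eand x := fun x =>
      intervalIntegral.integral_nonneg zero_le_one (fun q _ => sq_nonneg _)
    -- Gronwall
    have hgron : ∀ x ∈ Set.Icc (0:ℝ) T,
        ‖Eand x‖ ≤ gronwallBound 0 (4*C₁+C₂) 0 (x - 0) := by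
      apply norm_le_gronwallBound_of_norm_deriv_right_le (f' := ED)
      · exact fun x hx => ((hE_deriv x hx).continuousAt).continuousWithinAt
      · exact fun x hx => (hE_deriv x ⟨hx.1, le_of_lt hx.2⟩).hasDerivWithinAt
      · have hst0 : st 0 = sigF z 0 0 := by
          rw [hstdef]
          simp
        have hE0 : Eand 0 = 0 := by
          have : ∀ q : ℝ, (sigF z q 0 - st 0)^2 = 0 := by
            intro q
            rw [hst0, hsig0const q, sub_self]
            ring
          calc Eand 0 = ∫ q in (0:ℝ)..1, (0:ℝ) := by
                apply intervalIntegral.integral_congr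
                intro q _
                beta_reduce
                rw [this q]
            _ = 0 := by simp
        rw [hE0]; simp
      · intro x hx
        have hxI : x ∈ Set.Icc (0:ℝ) T := ⟨hx.1, le_of_lt hx.2⟩
        have hEx := hEnonneg x
        have hIB : |I x| ≤ C₁ := by
          have := hC₁ x hxI
          rwa [Real.norm_eq_abs] at this
        have cw : Continuous fun q => sigF z q x - st x :=
          (contSlice1 hsig_sm.continuous x).sub continuous_const
        have cP1lam : Continuous fun q => P1 lam q x :=
          contSlice1 (contDiff_P1 hlam_smooth).continuous x
        have hSbound : |∫ q in (0:ℝ)..1, P1 lam q x * (sigF z q x - st x)^2|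
            ≤ C₂ * Eand x := by
          have habs := intervalIntegral.abs_integral_le_integral_abs
            (f := fun q => P1 lam q x * (sigF z q x - st x)^2) (a := 0) (b := 1) (μ := MeasureTheory.volume) zero_le_one
          have hmono : (∫ q in (0:ℝ)..1, |P1 lam q x * (sigF z q x - st x)^2|)
              ≤ ∫ q in (0:ℝ)..1, C₂ * (sigF z q x - st x)^2 := by
            apply intervalIntegral.integral_mono_on zero_le_one
              ((cP1lam.mul (cw.pow 2)).abs.intervalIntegrable 0 1)
              ((continuous_const.mul (cw.pow 2)).intervalIntegrable 0 1)
            intro q hq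
            show |P1 lam q x * (sigF z q x - st x)^2| ≤ C₂ * (sigF z q x - st x)^2
            rw [abs_mul, abs_of_nonneg (sq_nonneg (sigF z q x - st x))]
            apply mul_le_mul_of_nonneg_right _ (sq_nonneg _)
            have := hC₂ (q, x) (Set.mk_mem_prod hq hxI)
            rwa [Real.norm_eq_abs] at this
          have hCE : (∫ q in (0:ℝ)..1, C₂ * (sigF z q x - st x)^2) = C₂ * Eand x :=
            intervalIntegral.integral_const_mul _ _
          linarith
        rw [hE'_eq x hxI, Real.norm_eq_abs, Real.norm_eq_abs, abs_of_nonneg hEx]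
        have h4 : |4 * I x * Eand x| ≤ 4 * C₁ * Eand x := by
          rw [abs_mul, abs_of_nonneg hEx, abs_mul]
          have : |(4:ℝ)| = 4 := by norm_num
          rw [this]
          nlinarith [abs_nonneg (I x)]
        have htri : |4 * I x * Eand x - ∫ q in (0:ℝ)..1, P1 lam q x * (sigF z q x - st x)^2|
            ≤ |4 * I x * Eand x| + |∫ q in (0:ℝ)..1, P1 lam q x * (sigF z q x - st x)^2| :=
          abs_sub _ _
        calc |4 * I x * Eand x - ∫ q in (0:ℝ)..1, P1 lam q x * (sigF z q x - st x)^2|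
            ≤ |4 * I x * Eand x| + |∫ q in (0:ℝ)..1, P1 lam q x * (sigF z q x - st x)^2| := htri
          _ ≤ 4 * C₁ * Eand x + C₂ * Eand x := add_le_add h4 hSbound
          _ = (4*C₁+C₂) * Eand x + 0 := by ring
    have hEzero : ∀ x ∈ Set.Icc (0:ℝ) T, Eand x = 0 := by
      intro x hx
      have h := hgron x hx
      rw [gronwallBound_ε0] at h
      simp only [zero_mul] at h
      have h2 : |Eand x| ≤ 0 := by rwa [Real.norm_eq_abs] at h
      have := abs_nonneg (Eand x)
      have habs : |Eand x| = 0 := le_antisymm h2 this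
      rwa [abs_of_nonneg (hEnonneg x)] at habs
    -- pointwise vanishing
    have hwt : ∀ q ∈ Set.Ioc (0:ℝ) 1, sigF z q t = st t := by
      have hE := hEzero t ht
      have hcont : ContinuousOn (fun q => (sigF z q t - st t)^2) (Set.Ioc (0:ℝ) 1) :=
        (((contSlice1 hsig_sm.continuous t).sub continuous_const).pow 2).continuousOn
      have hintOn : MeasureTheory.Integrable (fun q => (sigF z q t - st t)^2)
          (MeasureTheory.volume.restrict (Set.Ioc (0:ℝ) 1)) :=
        ((((contSlice1 hsig_sm.continuous t).sub continuous_const).pow 2)).integrableOn_Ioc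
      have hizero : (∫ q in Set.Ioc (0:ℝ) 1, (sigF z q t - st t)^2) = 0 := by
        rw [← intervalIntegral.integral_of_le zero_le_one]
        exact hE
      have hae : (fun q => (sigF z q t - st t)^2)
          =ᵐ[MeasureTheory.volume.restrict (Set.Ioc (0:ℝ) 1)] 0 :=
        (MeasureTheory.integral_eq_zero_iff_of_nonneg
          (fun q => sq_nonneg _) hintOn).mp hizero
      have heqOn := MeasureTheory.Measure.eqOn_Ioc_of_ae_eq (μ := MeasureTheory.volume)
        hae hcont continuousOn_const
      intro q hq
      have hq2 := heqOn hq
      have hq3 : (sigF z q t - st t)^2 = 0 := hq2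
      have := sq_eq_zero_iff.mp hq3
      linarith
    have hstt : ∀ q : ℝ, sigF z q t = st t := by
      intro q
      have hper : Function.Periodic (fun u => sigF z u t) 1 := fun u => hsig_per u t
      have hfr : sigF z (Int.fract q) t = sigF z q t := by
        have h := hper.sub_int_mul_eq (x := q) ⌊q⌋
        show sigF z (q - ⌊q⌋) t = sigF z q t
        simpa using h
      rcases eq_or_lt_of_le (Int.fract_nonneg q) with h0 | h0
      · have h1 : sigF z 1 t = st t := hwt 1 (Set.mem_Ioc.mpr ⟨zero_lt_one, le_refl 1⟩)
        have h01 : sigF z 0 t = sigF z 1 t := by simpa using (hsig_per 0 t).symm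
        rw [← hfr, ← h0, h01, h1]
      · have h1 : sigF z (Int.fract q) t = st t :=
          hwt (Int.fract q) (Set.mem_Ioc.mpr ⟨h0, le_of_lt (Int.fract_lt_one q)⟩)
        rw [← hfr, h1]
    rw [hnorm s₁ t, hnorm s₂ t, hstt s₁, hstt s₂]


end
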